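/- With N_d(n) defined by the DSC recurrence, N_{n-3}(n) = C(n,3)·(n^3+8n^2+11n-4)/8 for all n≥3. -/
import Mathlib

private lemma choose2' : ∀ m : ℕ, (2 : ℤ) * (m + 2).choose 2 = (m + 2) * (m + 1) := by
  intro m; induction m with
  | zero => norm_num [Nat.choose]
  | succ m ih =>
    have h : (m + 2 + 1).choose 2 = (m + 2).choose 1 + (m + 2).choose 2 :=
      Nat.choose_succ_succ' (m + 2) 1
    rw [show m + 1 + 2 = m + 2 + 1 from rfl, h]
    push_cast [Nat.choose_one_right]
    push_cast at ih
    linear_combination ih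

private lemma choose3' : ∀ m : ℕ, (6 : ℤ) * (m + 3).choose 3 = (m + 3) * (m + 2) * (m + 1) := by
  intro m; induction m with
  | zero => norm_num [Nat.choose]
  | succ m ih =>
    have h : (m + 3 + 1).choose 3 = (m + 3).choose 2 + (m + 3).choose 3 :=
      Nat.choose_succ_succ' (m + 3) 2
    have h2 := choose2' (m + 1)
    rw [show m + 1 + 3 = m + 3 + 1 from rfl, h]
    push_cast at h2 ih ⊢
    linear_combination 3 * h2 + ih


theorem stmt_6 (N : ℕ → ℕ → ℕ) (h0 : N 0 0 = 1)
    (hz : ∀ d n : ℕ, n < d → N d n = 0)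
    (hrec : ∀ d n : ℕ, N d (n + 1) =
      N d n + ∑ j ∈ Finset.Icc (d - 1) n, (j + 1).choose d * N j n) :
    ∀ n : ℕ, 3 ≤ n →
      (8 : ℤ) * N (n - 3) n =
        (n.choose 3 : ℤ) * ((n : ℤ) ^ 3 + 8 * (n : ℤ) ^ 2 + 11 * (n : ℤ) - 4) := by
  have LA : ∀ n : ℕ, N n n = 1 := by
    intro n; induction n with
    | zero => exact h0
    | succ n ih =>
      rw [hrec, hz (n + 1) n (Nat.lt_succ_self n)]
      simp [Nat.add_sub_cancel, Finset.Icc_self, ih]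
  have LB : ∀ n : ℕ, (2 : ℤ) * N n (n + 1) = (n + 1) * (n + 4) := by
    intro n; induction n with
    | zero =>
      have h1 := hrec 0 0
      simp [Finset.Icc_self, h0] at h1
      rw [h1]; norm_num
    | succ n ih =>
      have h1 := hrec (n + 1) (n + 1)
      rw [show (n + 1) - 1 = n from rfl,
        Finset.sum_Icc_succ_top (by omega : n ≤ n + 1)] at h1
      simp [Finset.Icc_self, Nat.choose_self, Nat.choose_succ_self_right, LA] at h1
      have h1' : (N (n + 1) (n + 2) : ℤ) = 1 + (N n (n + 1) + (n + 2)) := by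
        exact_mod_cast congrArg (Nat.cast : ℕ → ℤ) h1
      push_cast
      push_cast at ih
      linear_combination 2 * h1' + ih
  have LC : ∀ n : ℕ, (24 : ℤ) * N n (n + 2) =
      (n + 1) * (n + 2) * (n + 3) * (3 * n + 20) := by
    intro n; induction n with
    | zero =>
      have h1 := hrec 0 1
      have hb := LB 0
      rw [Finset.sum_Icc_succ_top (by omega : (0:ℕ) ≤ 0 + 1)] at h1
      simp [Finset.Icc_self, LA] at h1
      -- h1 : N 0 2 = N 0 1 + (N 0 1 + 1)
      have h1' : (N 0 2 : ℤ) = N 0 1 + (N 0 1 + 1) := by exact_mod_cast congrArg (Nat.cast : ℕ → ℤ) h1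
      push_cast at hb ⊢
      linear_combination 24 * h1' + 24 * hb
    | succ n ih =>
      have h1 := hrec (n + 1) (n + 2)
      rw [show (n + 1) - 1 = n from rfl,
        Finset.sum_Icc_succ_top (by omega : n ≤ n + 2),
        Finset.sum_Icc_succ_top (by omega : n ≤ n + 1)] at h1
      simp [Finset.Icc_self, Nat.choose_self, Nat.choose_succ_self_right, LA] at h1
      -- h1 : N (n+1) (n+3) = N (n+1) (n+2) + (N n (n+2) + (n+2) * N (n+1) (n+2) + (n+3).choose (n+1))
      have h1' : (N (n + 1) (n + 3) : ℤ) =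
          N (n + 1) (n + 2) + (N n (n + 2) + (n + 2) * N (n + 1) (n + 2)
            + ((n + 3).choose (n + 1) : ℕ)) := by
        exact_mod_cast congrArg (Nat.cast : ℕ → ℤ) h1
      have hK2 : (2 : ℤ) * ((n + 3).choose (n + 1)) = (n + 3) * (n + 2) := by
        have h := Nat.choose_symm (by omega : n + 1 ≤ n + 3)
        rw [show n + 3 - (n + 1) = 2 from by omega] at h
        have h' : ((n + 3).choose (n + 1) : ℤ) = ((n + 3).choose 2 : ℤ) := by
          exact_mod_cast congrArg (Nat.cast : ℕ → ℤ) h.symm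
        rw [h']
        have h2 := choose2' (n + 1)
        push_cast at h2 ⊢
        linarith
      have hb := LB (n + 1)
      push_cast at hb ih h1' hK2 ⊢
      linear_combination 24 * h1' + 12 * hb + ih + 12 * (n + 2) * hb + 12 * hK2
  have LE : ∀ n : ℕ, (48 : ℤ) * N n (n + 3) =
      (n + 1) * (n + 2) * (n + 3) *
        ((n:ℤ) ^ 3 + 17 * (n:ℤ) ^ 2 + 86 * (n:ℤ) + 128) := by
    intro n; induction n with
    | zero =>
      have h1 := hrec 0 2
      rw [Finset.sum_Icc_succ_top (by omega : (0:ℕ) ≤ 0 + 2),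
        Finset.sum_Icc_succ_top (by omega : (0:ℕ) ≤ 0 + 1)] at h1
      simp [Finset.Icc_self, LA] at h1
      have hc := LC 0
      have hb := LB 1
      have h1' : (N 0 3 : ℤ) = N 0 2 + (N 0 2 + N 1 2 + 1) := by
        exact_mod_cast congrArg (Nat.cast : ℕ → ℤ) h1
      push_cast at hb hc ⊢
      linear_combination 48 * h1' + 4 * hc + 24 * hb
    | succ n ih =>
      have h1 := hrec (n + 1) (n + 3)
      rw [show (n + 1) - 1 = n from rfl,
        Finset.sum_Icc_succ_top (by omega : n ≤ n + 3),
        Finset.sum_Icc_succ_top (by omega : n ≤ n + 2),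
        Finset.sum_Icc_succ_top (by omega : n ≤ n + 1)] at h1
      simp [Finset.Icc_self, Nat.choose_self, Nat.choose_succ_self_right, LA] at h1
      have h1' : (N (n + 1) (n + 4) : ℤ) =
          N (n + 1) (n + 3) + (N n (n + 3) + (n + 2) * N (n + 1) (n + 3)
            + ((n + 3).choose (n + 1) : ℕ) * N (n + 2) (n + 3)
            + ((n + 4).choose (n + 1) : ℕ)) := by
        exact_mod_cast congrArg (Nat.cast : ℕ → ℤ) h1
      have hK2 : (2 : ℤ) * ((n + 3).choose (n + 1)) = (n + 3) * (n + 2) := by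
        have h := Nat.choose_symm (by omega : n + 1 ≤ n + 3)
        rw [show n + 3 - (n + 1) = 2 from by omega] at h
        have h' : ((n + 3).choose (n + 1) : ℤ) = ((n + 3).choose 2 : ℤ) := by
          exact_mod_cast congrArg (Nat.cast : ℕ → ℤ) h.symm
        rw [h']
        have h2 := choose2' (n + 1)
        push_cast at h2 ⊢
        linarith
      have hK3 : (6 : ℤ) * ((n + 4).choose (n + 1)) = (n + 4) * (n + 3) * (n + 2) := by
        have h := Nat.choose_symm (by omega : n + 1 ≤ n + 4)
        rw [show n + 4 - (n + 1) = 3 from by omega] at h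
        have h' : ((n + 4).choose (n + 1) : ℤ) = ((n + 4).choose 3 : ℤ) := by
          exact_mod_cast congrArg (Nat.cast : ℕ → ℤ) h.symm
        rw [h']
        have h3 := choose3' (n + 1)
        push_cast at h3 ⊢
        linarith
      have hc := LC (n + 1)
      have hb := LB (n + 2)
      push_cast at hb hc ih h1' hK2 hK3 ⊢
      linear_combination 48 * h1' + 2 * hc + ih + 2 * (n + 2) * hc
        + 24 * ((n + 3).choose (n + 1) : ℤ) * hb + 12 * ((n:ℤ) + 3) * ((n:ℤ) + 6) * hK2
        + 8 * hK3
  intro n hn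
  obtain ⟨m, rfl⟩ : ∃ m, n = m + 3 := ⟨n - 3, by omega⟩
  rw [show m + 3 - 3 = m from by omega]
  have hE := LE m
  have hC : (6 : ℤ) * ((m + 3).choose 3) = (m + 3) * (m + 2) * (m + 1) := choose3' m
  have key : (6 : ℤ) * (8 * N m (m + 3)) =
      6 * (((m + 3).choose 3 : ℤ) *
        (((m:ℤ) + 3) ^ 3 + 8 * ((m:ℤ) + 3) ^ 2 + 11 * ((m:ℤ) + 3) - 4)) := by
    push_cast at hE hC ⊢
    linear_combination hE - (((m:ℤ) + 3) ^ 3 + 8 * ((m:ℤ) + 3) ^ 2 + 11 * ((m:ℤ) + 3) - 4) * hC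
  push_cast at key ⊢
  linarith
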